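/- arXiv:2207.14173 — 2 statements merged into one kernel-verified Lean document; each statement's English description precedes it below -/
import Mathlib

section
/- Let g ∈ C^∞(ℝ × ℝ) be such that g(y_0, θ_0) is bounded with all derivatives and supported in {|θ_0| ≤ 1}. Define b^ε(y_0) = g(y_0, y_0/ε). Let m_0 = y_0 ∂_{y_0}. Then for every r ∈ ℕ there is a constant C_r, independent of ε ∈ (0,1], such that |m_0^r b^ε|_{L^∞(ℝ)} ≤ C_r. -/
noncomputable def Mop (h : ℝ → ℝ → ℝ) : ℝ → ℝ → ℝ :=
  fun y θ => fderiv ℝ (Function.uncurry h) (y, θ) (y, θ)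

lemma Mop_contDiff {h : ℝ → ℝ → ℝ} (hh : ContDiff ℝ (⊤ : ℕ∞) (Function.uncurry h)) :
    ContDiff ℝ (⊤ : ℕ∞) (Function.uncurry (Mop h)) := by
  have h1 : ContDiff ℝ (⊤ : ℕ∞) (fderiv ℝ (Function.uncurry h)) :=
    hh.fderiv_right (by simp)
  have heq : Function.uncurry (Mop h)
      = fun p : ℝ × ℝ => fderiv ℝ (Function.uncurry h) p p := by
    funext p; cases p; rfl
  rw [heq]
  exact h1.clm_apply contDiff_id

lemma Mop_supp {h : ℝ → ℝ → ℝ} (hs : ∀ y θ, 1 < |θ| → h y θ = 0) :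
    ∀ y θ, 1 < |θ| → Mop h y θ = 0 := by
  intro y θ hθ
  have hopen : IsOpen {p : ℝ × ℝ | 1 < |p.2|} :=
    isOpen_lt continuous_const (continuous_abs.comp continuous_snd)
  have hev : Function.uncurry h =ᶠ[nhds (y, θ)] fun _ => (0 : ℝ) := by
    filter_upwards [hopen.mem_nhds hθ] with p hp
    exact hs p.1 p.2 hp
  have : fderiv ℝ (Function.uncurry h) (y, θ)
      = fderiv ℝ (fun _ : ℝ × ℝ => (0 : ℝ)) (y, θ) := hev.fderiv_eq
  simp [Mop, this]

lemma m0_step {h : ℝ → ℝ → ℝ} (hh : ContDiff ℝ (⊤ : ℕ∞) (Function.uncurry h)) {ε : ℝ}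
    (hε : ε ≠ 0) :
    (fun x : ℝ => x * deriv (fun t => h t (t / ε)) x) = fun t => Mop h t (t / ε) := by
  funext t
  have hγ : HasDerivAt (fun s : ℝ => (s, s / ε)) ((1 : ℝ), 1 / ε) t := by
    exact (hasDerivAt_id t).prodMk ((hasDerivAt_id t).div_const ε)
  set L := fderiv ℝ (Function.uncurry h) (t, t / ε) with hL
  have hF : HasFDerivAt (Function.uncurry h) L (t, t / ε) :=
    (hh.differentiable (by simp) (t, t / ε)).hasFDerivAt
  have hcomp : HasDerivAt (fun s => h s (s / ε)) (L ((1 : ℝ), 1 / ε)) t := by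
    exact hF.comp_hasDerivAt t hγ
  rw [hcomp.deriv]
  have hsmul : ((t : ℝ), t / ε) = t • ((1 : ℝ), 1 / ε) := by
    simp [Prod.smul_def, smul_eq_mul]
    ring
  show t * L ((1 : ℝ), 1 / ε) = L (t, t / ε)
  rw [hsmul, L.map_smul, smul_eq_mul]

lemma iter_eq {ε : ℝ} (hε : ε ≠ 0) :
    ∀ r (h : ℝ → ℝ → ℝ), ContDiff ℝ (⊤ : ℕ∞) (Function.uncurry h) →
      (fun (f : ℝ → ℝ) => fun x : ℝ => x * deriv f x)^[r] (fun t => h t (t / ε))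
        = fun y0 => Mop^[r] h y0 (y0 / ε) := by
  intro r
  induction r with
  | zero => intro h _; simp
  | succ n ih =>
    intro h hh
    rw [Function.iterate_succ_apply, m0_step hh hε, ih (Mop h) (Mop_contDiff hh),
      ← Function.iterate_succ_apply]

lemma Mop_iter_contDiff {g : ℝ → ℝ → ℝ} (hg : ContDiff ℝ (⊤ : ℕ∞) (Function.uncurry g)) :
    ∀ r, ContDiff ℝ (⊤ : ℕ∞) (Function.uncurry (Mop^[r] g)) := by
  intro r
  induction r with
  | zero => simpa using hg
  | succ n ih => rw [Function.iterate_succ_apply']; exact Mop_contDiff ih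

lemma Mop_iter_supp {g : ℝ → ℝ → ℝ} (hs : ∀ y θ, 1 < |θ| → g y θ = 0) :
    ∀ r y θ, 1 < |θ| → Mop^[r] g y θ = 0 := by
  intro r
  induction r with
  | zero => simpa using hs
  | succ n ih => rw [Function.iterate_succ_apply']; exact Mop_supp ih

/-- Uniform conormal bounds for the boundary pulse datum: if `g(y_0, θ_0)` is smooth,
bounded with all derivatives, and supported in `{|θ_0| ≤ 1}`, then for every `r` the
`r`-fold application of `m_0 = y_0 ∂_{y_0}` to `b^ε(y_0) = g(y_0, y_0/ε)` is bounded in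
`L^∞(ℝ)` uniformly in `ε ∈ (0,1]`. -/
theorem stmt16 (g : ℝ → ℝ → ℝ)
    (hg : ContDiff ℝ (⊤ : ℕ∞) (Function.uncurry g))
    (hbd : ∀ k : ℕ, ∃ C, ∀ x : ℝ × ℝ, ‖iteratedFDeriv ℝ k (Function.uncurry g) x‖ ≤ C)
    (hsupp : ∀ y0 θ0 : ℝ, 1 < |θ0| → g y0 θ0 = 0) :
    ∀ r : ℕ, ∃ C, ∀ ε : ℝ, 0 < ε → ε ≤ 1 → ∀ y0 : ℝ,
      |(fun (f : ℝ → ℝ) => fun x : ℝ => x * deriv f x)^[r] (fun t => g t (t / ε)) y0|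
        ≤ C := by
  intro r
  have hh := Mop_iter_contDiff hg r
  have hs := Mop_iter_supp hsupp r
  have hK : IsCompact ((Set.Icc (-1 : ℝ) 1) ×ˢ (Set.Icc (-1 : ℝ) 1)) :=
    isCompact_Icc.prod isCompact_Icc
  obtain ⟨C, hC⟩ := hK.exists_bound_of_continuousOn hh.continuous.continuousOn
  have hC0 : 0 ≤ C := le_trans (norm_nonneg _)
    (hC ((0 : ℝ), (0 : ℝ)) ⟨⟨by norm_num, by norm_num⟩, ⟨by norm_num, by norm_num⟩⟩)
  refine ⟨C, ?_⟩
  intro ε hε0 hε1 y0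
  rw [iter_eq (ne_of_gt hε0) r g hg]
  show |Mop^[r] g y0 (y0 / ε)| ≤ C
  by_cases hcase : 1 < |y0 / ε|
  · rw [hs y0 (y0 / ε) hcase]; simpa using hC0
  · push_neg at hcase
    have hy : |y0| ≤ 1 := by
      have h1 : |y0| / ε ≤ 1 := by
        rwa [abs_div, abs_of_pos hε0] at hcase
      have h2 : |y0| ≤ ε := (div_le_one hε0).mp h1
      linarith
    have hθ1 : -1 ≤ y0 / ε := neg_le_of_abs_le hcase
    have hθ2 : y0 / ε ≤ 1 := le_of_abs_le hcase
    have := hC (y0, y0 / ε)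
      ⟨⟨neg_le_of_abs_le hy, le_of_abs_le hy⟩, ⟨hθ1, hθ2⟩⟩
    simpa [Real.norm_eq_abs, Function.uncurry] using this
end

section
/- Under the setup of the previous statement, if additionally the function g^ε(y) := f(y, y_0/ε, y_n/ε) · y_n²/ε is considered on the interaction region I_ε = {|y_0| ≤ Mε, 0 ≤ y_n ≤ Mε}, then for every multi-index γ there is C_γ with |(V_1,...,V_{n+3})^γ g^ε|_{L^∞(I_ε)} ≤ C_γ ε for all ε ∈ (0,1]. -/
open scoped ContDiff

namespace Stmt18Aux

variable {m : ℕ}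

/-- Functions with bounded derivatives of all orders on balls. -/
def Tame (m : ℕ) (h : (ℝ × (Fin m → ℝ) × ℝ) × ℝ × ℝ → ℝ) : Prop :=
  ContDiff ℝ ∞ h ∧
    ∀ R > (0:ℝ), ∀ k : ℕ, ∃ C, ∀ x, ‖x‖ ≤ R → ‖iteratedFDeriv ℝ k h x‖ ≤ C

lemma Tame.fderiv_apply {h : (ℝ × (Fin m → ℝ) × ℝ) × ℝ × ℝ → ℝ} (hh : Tame m h)
    (v : (ℝ × (Fin m → ℝ) × ℝ) × ℝ × ℝ) : Tame m (fun x => fderiv ℝ h x v) := by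
  have hfd : ContDiff ℝ ∞ (fderiv ℝ h) := hh.1.fderiv_right (by simp)
  constructor
  · exact hfd.clm_apply contDiff_const
  · intro R hR k
    obtain ⟨C, hC⟩ := hh.2 R hR (k + 1)
    refine ⟨‖v‖ * C, fun x hx => ?_⟩
    calc ‖iteratedFDeriv ℝ k (fun x => fderiv ℝ h x v) x‖
        ≤ ‖v‖ * ‖iteratedFDeriv ℝ k (fderiv ℝ h) x‖ :=
          norm_iteratedFDeriv_clm_apply_const hfd.contDiffAt (by exact_mod_cast le_top)
      _ = ‖v‖ * ‖iteratedFDeriv ℝ (k + 1) h x‖ := by rw [norm_iteratedFDeriv_fderiv]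
      _ ≤ ‖v‖ * C := by
          have := hC x hx
          exact mul_le_mul_of_nonneg_left this (norm_nonneg v)



/-- The substitution map `y ↦ (y, y₀/ε, y_n/ε)` as a continuous linear map. -/
noncomputable def U (m : ℕ) (ε : ℝ) :
    (ℝ × (Fin m → ℝ) × ℝ) →L[ℝ] (ℝ × (Fin m → ℝ) × ℝ) × ℝ × ℝ :=
  (ContinuousLinearMap.id ℝ (ℝ × (Fin m → ℝ) × ℝ)).prod
    ((ε⁻¹ • (ContinuousLinearMap.fst ℝ ℝ ((Fin m → ℝ) × ℝ))).prod
      (ε⁻¹ • ((ContinuousLinearMap.snd ℝ (Fin m → ℝ) ℝ).comp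
        (ContinuousLinearMap.snd ℝ ℝ ((Fin m → ℝ) × ℝ)))))

lemma U_apply (ε : ℝ) (y : ℝ × (Fin m → ℝ) × ℝ) :
    U m ε y = (y, y.1 / ε, y.2.2 / ε) := by
  simp [U, div_eq_inv_mul, smul_eq_mul]

lemma fderiv_dir {h : (ℝ × (Fin m → ℝ) × ℝ) × ℝ × ℝ → ℝ} (x : (ℝ × (Fin m → ℝ) × ℝ) × ℝ × ℝ)
    (v : ℝ × (Fin m → ℝ) × ℝ) (ε : ℝ) :
    fderiv ℝ h x (v, v.1 / ε, v.2.2 / ε) =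
      fderiv ℝ h x (v, 0, 0) + (v.1 / ε) * fderiv ℝ h x (0, 1, 0)
        + (v.2.2 / ε) * fderiv ℝ h x (0, 0, 1) := by
  have e : (v, v.1 / ε, v.2.2 / ε)
      = (v, (0:ℝ), (0:ℝ)) + (v.1 / ε) • ((0 : ℝ × (Fin m → ℝ) × ℝ), (1:ℝ), (0:ℝ))
        + (v.2.2 / ε) • ((0 : ℝ × (Fin m → ℝ) × ℝ), (0:ℝ), (1:ℝ)) := by
    simp [Prod.ext_iff]
  rw [e, map_add, map_add, map_smul, map_smul, smul_eq_mul, smul_eq_mul]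

lemma fderiv_base_apply {h : (ℝ × (Fin m → ℝ) × ℝ) × ℝ × ℝ → ℝ} (hh : ContDiff ℝ ∞ h)
    (ε r : ℝ) (a b c : ℕ) (y v : ℝ × (Fin m → ℝ) × ℝ) :
    fderiv ℝ (fun y : ℝ × (Fin m → ℝ) × ℝ =>
        r * h (y, y.1 / ε, y.2.2 / ε) * y.1 ^ a * y.2.2 ^ b / ε ^ c) y v =
      (r * (fderiv ℝ h (y, y.1 / ε, y.2.2 / ε)) (v, v.1 / ε, v.2.2 / ε) * y.1 ^ a * y.2.2 ^ b
       + r * h (y, y.1 / ε, y.2.2 / ε) * ((a:ℝ) * y.1 ^ (a - 1) * v.1) * y.2.2 ^ b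
       + r * h (y, y.1 / ε, y.2.2 / ε) * y.1 ^ a * ((b:ℝ) * y.2.2 ^ (b - 1) * v.2.2)) * (ε ^ c)⁻¹ := by
  have hU : HasFDerivAt (fun y : ℝ × (Fin m → ℝ) × ℝ => h (y, y.1 / ε, y.2.2 / ε))
      ((fderiv ℝ h (y, y.1 / ε, y.2.2 / ε)).comp (U m ε)) y := by
    have h3 := ((hh.differentiable (by simp) (U m ε y)).hasFDerivAt).comp y (U m ε).hasFDerivAt
    simp only [Function.comp_def] at h3
    simpa only [U_apply] using h3
  have hP : HasFDerivAt (fun y : ℝ × (Fin m → ℝ) × ℝ => y.1 ^ a)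
      (((a:ℝ) * y.1 ^ (a - 1)) • (ContinuousLinearMap.fst ℝ ℝ ((Fin m → ℝ) × ℝ))) y := by
    have := HasDerivAt.comp_hasFDerivAt (𝕜 := ℝ) y (hasDerivAt_pow a y.1) (hasFDerivAt_fst (p := y))
    simpa [Function.comp_def] using this
  have hQ : HasFDerivAt (fun y : ℝ × (Fin m → ℝ) × ℝ => y.2.2 ^ b)
      (((b:ℝ) * y.2.2 ^ (b - 1)) • ((ContinuousLinearMap.snd ℝ (Fin m → ℝ) ℝ).comp
        (ContinuousLinearMap.snd ℝ ℝ ((Fin m → ℝ) × ℝ)))) y := by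
    have h2 : HasFDerivAt (fun y : ℝ × (Fin m → ℝ) × ℝ => y.2.2)
        ((ContinuousLinearMap.snd ℝ (Fin m → ℝ) ℝ).comp
          (ContinuousLinearMap.snd ℝ ℝ ((Fin m → ℝ) × ℝ))) y := by
      have := (hasFDerivAt_snd (𝕜 := ℝ) (p := y.2)).comp y (hasFDerivAt_snd (𝕜 := ℝ) (p := y))
      simpa [Function.comp_def] using this
    have := HasDerivAt.comp_hasFDerivAt (𝕜 := ℝ) y (hasDerivAt_pow b y.2.2) h2
    simpa [Function.comp_def] using this
  have H := (((hU.const_mul r).mul hP).mul hQ).const_mul (ε ^ c)⁻¹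
  have Ffun : (fun y : ℝ × (Fin m → ℝ) × ℝ =>
      r * h (y, y.1 / ε, y.2.2 / ε) * y.1 ^ a * y.2.2 ^ b / ε ^ c)
      = fun y : ℝ × (Fin m → ℝ) × ℝ =>
        (ε ^ c)⁻¹ * (r * h (y, y.1 / ε, y.2.2 / ε) * y.1 ^ a * y.2.2 ^ b) :=
    funext fun y => by rw [div_eq_inv_mul]
  rw [Ffun, (show HasFDerivAt (fun y : ℝ × (Fin m → ℝ) × ℝ => (ε ^ c)⁻¹ * (r * h (y, y.1 / ε, y.2.2 / ε) * y.1 ^ a * y.2.2 ^ b)) _ y from H).fderiv]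
  simp only [ContinuousLinearMap.coe_smul', ContinuousLinearMap.add_apply,
    ContinuousLinearMap.smul_apply, ContinuousLinearMap.coe_comp', Function.comp_apply,
    ContinuousLinearMap.coe_fst', ContinuousLinearMap.coe_snd', Prod.fst, Prod.snd, Pi.smul_apply,
    smul_eq_mul, U_apply, Pi.mul_apply]
  ring


/-- Admissible families: sums of terms `r·h(y,y₀/ε,y_n/ε)·y₀^a y_n^b/ε^c` with `a+b ≥ c+1`. -/
inductive Adm (m : ℕ) : (ℝ → (ℝ × (Fin m → ℝ) × ℝ → ℝ)) → Prop
  | base (r : ℝ) (h : (ℝ × (Fin m → ℝ) × ℝ) × ℝ × ℝ → ℝ) (a b c : ℕ)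
      (hh : Tame m h) (hle : c + 1 ≤ a + b) :
      Adm m (fun ε y => r * h (y, y.1 / ε, y.2.2 / ε) * y.1 ^ a * y.2.2 ^ b / ε ^ c)
  | add {G₁ G₂} : Adm m G₁ → Adm m G₂ → Adm m (fun ε y => G₁ ε y + G₂ ε y)

/-- Families admissible for positive `ε`. -/
def AdmOn (m : ℕ) (G : ℝ → (ℝ × (Fin m → ℝ) × ℝ → ℝ)) : Prop :=
  ∃ G', Adm m G' ∧ ∀ ε > (0:ℝ), G ε = G' ε

lemma Adm.admOn {G} (hG : Adm m G) : AdmOn m G := ⟨G, hG, fun _ _ => rfl⟩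

lemma AdmOn.congr {G G'} (hG : AdmOn m G) (e : ∀ ε > (0:ℝ), ∀ y, G ε y = G' ε y) :
    AdmOn m G' := by
  obtain ⟨G'', hG'', he⟩ := hG
  exact ⟨G'', hG'', fun ε hε => by rw [← he ε hε]; exact (funext (e ε hε)).symm⟩

lemma AdmOn.add {G₁ G₂} (h₁ : AdmOn m G₁) (h₂ : AdmOn m G₂) :
    AdmOn m (fun ε y => G₁ ε y + G₂ ε y) := by
  obtain ⟨F₁, hF₁, he₁⟩ := h₁
  obtain ⟨F₂, hF₂, he₂⟩ := h₂
  exact ⟨_, hF₁.add hF₂, fun ε hε => funext fun y => by show G₁ ε y + G₂ ε y = F₁ ε y + F₂ ε y; rw [he₁ ε hε, he₂ ε hε]⟩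

lemma Adm.smooth {G} (hG : Adm m G) (ε : ℝ) : ContDiff ℝ ∞ (G ε) := by
  induction hG with
  | base r h a b c hh hle =>
      have h1 : ContDiff ℝ ∞ (fun y : ℝ × (Fin m → ℝ) × ℝ => h (y, y.1 / ε, y.2.2 / ε)) := by
        have := hh.1.comp (U m ε).contDiff
        simpa only [Function.comp_def, U_apply] using this
      exact (((contDiff_const.mul h1).mul (contDiff_fst.pow a)).mul
        (contDiff_snd.snd.pow b)).div_const _
  | add h1 h2 ih1 ih2 => exact ih1.add ih2

lemma Adm.bound {G} (hG : Adm m G) (M : ℝ) (hM : 0 < M) (R : ℝ) (hR : 0 < R) :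
    ∃ C, ∀ ε : ℝ, 0 < ε → ε ≤ 1 → ∀ y : ℝ × (Fin m → ℝ) × ℝ, ‖y‖ ≤ R →
      |y.1| ≤ M * ε → 0 ≤ y.2.2 → y.2.2 ≤ M * ε → |G ε y| ≤ C * ε := by
  induction hG with
  | add h1 h2 ih1 ih2 =>
      obtain ⟨C₁, hC₁⟩ := ih1
      obtain ⟨C₂, hC₂⟩ := ih2
      refine ⟨C₁ + C₂, fun ε hε hε1 y hy h1' h2' h3' => ?_⟩
      calc |_| ≤ _ + _ := abs_add_le _ _
        _ ≤ C₁ * ε + C₂ * ε := add_le_add (hC₁ ε hε hε1 y hy h1' h2' h3')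
            (hC₂ ε hε hε1 y hy h1' h2' h3')
        _ = (C₁ + C₂) * ε := by ring
  | base r h a b c hh hle =>
      obtain ⟨C, hC⟩ := hh.2 (R + M) (by linarith) 0
      refine ⟨|r| * C * M ^ (a + b), fun ε hε hε1 y hy h1' h2' h3' => ?_⟩
      have hxnorm : ‖((y, y.1 / ε, y.2.2 / ε) : (ℝ × (Fin m → ℝ) × ℝ) × ℝ × ℝ)‖ ≤ R + M := by
        have e1 : |y.1 / ε| ≤ M := by
          rw [abs_div, abs_of_pos hε, div_le_iff₀ hε]
          exact h1'
        have e2 : |y.2.2 / ε| ≤ M := by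
          rw [abs_div, abs_of_pos hε, div_le_iff₀ hε, abs_of_nonneg h2']
          exact h3'
        rw [Prod.norm_def]
        refine max_le (by linarith) ?_
        rw [Prod.norm_def]
        simp only [Real.norm_eq_abs]
        exact max_le (by linarith) (by linarith)
      have hCx : |h (y, y.1 / ε, y.2.2 / ε)| ≤ C := by
        have := hC _ hxnorm
        rwa [norm_iteratedFDeriv_zero, Real.norm_eq_abs] at this
      have hC0 : 0 ≤ C := le_trans (abs_nonneg _) hCx
      have key : |r * h (y, y.1 / ε, y.2.2 / ε) * y.1 ^ a * y.2.2 ^ b / ε ^ c|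
          ≤ |r| * C * (M * ε) ^ a * (M * ε) ^ b / ε ^ c := by
        rw [abs_div, abs_of_pos (pow_pos hε c), abs_mul, abs_mul, abs_mul, abs_pow, abs_pow]
        have hy2 : |y.2.2| ≤ M * ε := by rw [abs_of_nonneg h2']; exact h3'
        gcongr
      refine key.trans ?_
      have hεc : (ε : ℝ) ^ c ≠ 0 := pow_ne_zero _ hε.ne'
      have e3 : (M * ε) ^ a * (M * ε) ^ b / ε ^ c = M ^ (a + b) * ε ^ (a + b - c) := by
        rw [← pow_add, mul_pow, mul_div_assoc, pow_sub₀ ε hε.ne' (show c ≤ a + b by omega), div_eq_mul_inv]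
      have e4 : |r| * C * (M * ε) ^ a * (M * ε) ^ b / ε ^ c
          = |r| * C * M ^ (a + b) * ε ^ (a + b - c) := by
        rw [mul_assoc (|r| * C), mul_div_assoc, e3]; ring
      rw [e4]
      have e5 : ε ^ (a + b - c) ≤ ε := by
        have h1k : 1 ≤ a + b - c := by omega
        calc ε ^ (a + b - c) ≤ ε ^ 1 := pow_le_pow_of_le_one hε.le hε1 h1k
          _ = ε := pow_one ε
      exact mul_le_mul_of_nonneg_left e5
        (mul_nonneg (mul_nonneg (abs_nonneg r) hC0) (pow_nonneg hM.le _))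


lemma adm_gen_fst {h : (ℝ × (Fin m → ℝ) × ℝ) × ℝ × ℝ → ℝ} (hh : Tame m h) (r : ℝ)
    (a b c : ℕ) (hle : c + 1 ≤ a + b) (v : ℝ × (Fin m → ℝ) × ℝ) :
    AdmOn m (fun ε y => y.1 * fderiv ℝ
      (fun z : ℝ × (Fin m → ℝ) × ℝ => r * h (z, z.1 / ε, z.2.2 / ε) * z.1 ^ a * z.2.2 ^ b / ε ^ c)
      y v) := by
  have T1 := Adm.base (m := m) r (fun x => fderiv ℝ h x (v, 0, 0)) (a+1) b c
    (hh.fderiv_apply _) (by omega)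
  have T2 := Adm.base (m := m) (r * v.1) (fun x => fderiv ℝ h x (0, 1, 0)) (a+1) b (c+1)
    (hh.fderiv_apply _) (by omega)
  have T3 := Adm.base (m := m) (r * v.2.2) (fun x => fderiv ℝ h x (0, 0, 1)) (a+1) b (c+1)
    (hh.fderiv_apply _) (by omega)
  have T4 := Adm.base (m := m) (r * a * v.1) h a b c hh hle
  have T5 := Adm.base (m := m) (r * b * v.2.2) h (a+1) (b-1) c hh (by omega)
  refine ((((T1.add T2).add T3).add T4).add T5).admOn.congr fun ε hε y => ?_
  rw [fderiv_base_apply hh.1, fderiv_dir]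
  rcases a with _ | a <;> push_cast <;> field_simp <;> ring

lemma adm_gen_snd {h : (ℝ × (Fin m → ℝ) × ℝ) × ℝ × ℝ → ℝ} (hh : Tame m h) (r : ℝ)
    (a b c : ℕ) (hle : c + 1 ≤ a + b) (v : ℝ × (Fin m → ℝ) × ℝ) :
    AdmOn m (fun ε y => y.2.2 * fderiv ℝ
      (fun z : ℝ × (Fin m → ℝ) × ℝ => r * h (z, z.1 / ε, z.2.2 / ε) * z.1 ^ a * z.2.2 ^ b / ε ^ c)
      y v) := by
  have T1 := Adm.base (m := m) r (fun x => fderiv ℝ h x (v, 0, 0)) a (b+1) c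
    (hh.fderiv_apply _) (by omega)
  have T2 := Adm.base (m := m) (r * v.1) (fun x => fderiv ℝ h x (0, 1, 0)) a (b+1) (c+1)
    (hh.fderiv_apply _) (by omega)
  have T3 := Adm.base (m := m) (r * v.2.2) (fun x => fderiv ℝ h x (0, 0, 1)) a (b+1) (c+1)
    (hh.fderiv_apply _) (by omega)
  have T4 := Adm.base (m := m) (r * a * v.1) h (a-1) (b+1) c hh (by omega)
  have T5 := Adm.base (m := m) (r * b * v.2.2) h a b c hh hle
  refine ((((T1.add T2).add T3).add T4).add T5).admOn.congr fun ε hε y => ?_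
  rw [fderiv_base_apply hh.1, fderiv_dir]
  rcases b with _ | b <;> push_cast <;> field_simp <;> ring


end Stmt18Aux

/-- The generators `y_0∂_0, y_0∂_n, y_n∂_0, y_n∂_n, ∂_1,…,∂_{n−1}` of the module of
vector fields on `ℝ × ℝ^m × ℝ` tangent to `Δ = {y_0 = y_n = 0}`, acting as operators. -/
noncomputable def tangentGen (m : ℕ) :
    Fin (m + 4) → ((ℝ × (Fin m → ℝ) × ℝ → ℝ) → (ℝ × (Fin m → ℝ) × ℝ → ℝ)) :=
  fun i F y =>
    if h : (i : ℕ) < m then fderiv ℝ F y (0, Pi.single ⟨i, h⟩ 1, 0)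
    else if (i : ℕ) = m then y.1 * fderiv ℝ F y (1, 0, 0)
    else if (i : ℕ) = m + 1 then y.1 * fderiv ℝ F y (0, 0, 1)
    else if (i : ℕ) = m + 2 then y.2.2 * fderiv ℝ F y (1, 0, 0)
    else y.2.2 * fderiv ℝ F y (0, 0, 1)

/-- Composition of a list of operators. -/
def compList {α : Type*} (L : List (α → α)) : α → α := L.foldr (· ∘ ·) id

namespace Stmt18Aux

lemma Adm.gen {G} (hG : Adm m G) (i : Fin (m + 4)) :
    AdmOn m (fun ε => tangentGen m i (G ε)) := by
  induction hG with
  | @add G₁ G₂ h1 h2 ih1 ih2 =>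
      refine (ih1.add ih2).congr fun ε hε y => ?_
      have d1 : DifferentiableAt ℝ (G₁ ε) y :=
        ((h1.smooth ε).differentiable (by simp)).differentiableAt
      have d2 : DifferentiableAt ℝ (G₂ ε) y :=
        ((h2.smooth ε).differentiable (by simp)).differentiableAt
      have hfd : fderiv ℝ (fun y => G₁ ε y + G₂ ε y) y
          = fderiv ℝ (G₁ ε) y + fderiv ℝ (G₂ ε) y := fderiv_add d1 d2
      simp only [tangentGen]
      split_ifs <;> simp [hfd] <;> ring
  | base r h a b c hh hle =>
      by_cases him : (i : ℕ) < m
      · refine (Adm.base (m := m) r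
          (fun x => fderiv ℝ h x ((0, Pi.single ⟨(i : ℕ), him⟩ 1, 0), 0, 0)) a b c
          (hh.fderiv_apply _) hle).admOn.congr fun ε hε y => ?_
        simp only [tangentGen, dif_pos him]
        rw [fderiv_base_apply hh.1, fderiv_dir]
        norm_num
        ring
      · have hi4 : (i : ℕ) < m + 4 := i.isLt
        by_cases h0 : (i : ℕ) = m
        · refine (adm_gen_fst hh r a b c hle (1, 0, 0)).congr fun ε hε y => ?_
          simp only [tangentGen, dif_neg him, if_pos h0]
        · by_cases h1 : (i : ℕ) = m + 1
          · refine (adm_gen_fst hh r a b c hle (0, 0, 1)).congr fun ε hε y => ?_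
            simp only [tangentGen, dif_neg him, if_neg h0, if_pos h1]
          · by_cases h2 : (i : ℕ) = m + 2
            · refine (adm_gen_snd hh r a b c hle (1, 0, 0)).congr fun ε hε y => ?_
              simp only [tangentGen, dif_neg him, if_neg h0, if_neg h1, if_pos h2]
            · refine (adm_gen_snd hh r a b c hle (0, 0, 1)).congr fun ε hε y => ?_
              simp only [tangentGen, dif_neg him, if_neg h0, if_neg h1, if_neg h2]

lemma AdmOn.gen {G} (hG : AdmOn m G) (i : Fin (m + 4)) :
    AdmOn m (fun ε => tangentGen m i (G ε)) := by
  obtain ⟨G', hG', he⟩ := hG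
  exact (hG'.gen i).congr fun ε hε y => by rw [he ε hε]

lemma AdmOn.bound {G} (hG : AdmOn m G) (M : ℝ) (hM : 0 < M) (R : ℝ) (hR : 0 < R) :
    ∃ C, ∀ ε : ℝ, 0 < ε → ε ≤ 1 → ∀ y : ℝ × (Fin m → ℝ) × ℝ, ‖y‖ ≤ R →
      |y.1| ≤ M * ε → 0 ≤ y.2.2 → y.2.2 ≤ M * ε → |G ε y| ≤ C * ε := by
  obtain ⟨G', hG', he⟩ := hG
  obtain ⟨C, hC⟩ := hG'.bound M hM R hR
  exact ⟨C, fun ε hε hε1 y hy e1 e2 e3 => by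
    rw [he ε hε]; exact hC ε hε hε1 y hy e1 e2 e3⟩

end Stmt18Aux

/-- `O(ε)` conormal bounds for `g^ε(y) = f(y, y_0/ε, y_n/ε)·y_n²/ε` on the interaction
region `I_ε = {|y_0| ≤ Mε, 0 ≤ y_n ≤ Mε}` (intersected with a bounded set): every
composition of the tangent generators applied to `g^ε` is bounded by `C_γ ε` there,
uniformly for `ε ∈ (0,1]`. -/
theorem stmt18 (m : ℕ) (f : (ℝ × (Fin m → ℝ) × ℝ) × ℝ × ℝ → ℝ)
    (hf : ContDiff ℝ (⊤ : ℕ∞) f)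
    (hbdd : ∀ R > 0, ∀ k : ℕ, ∃ C, ∀ x, ‖x‖ ≤ R → ‖iteratedFDeriv ℝ k f x‖ ≤ C) :
    ∀ (L : List (Fin (m + 4))), ∀ M > 0, ∀ R > 0, ∃ C, ∀ ε : ℝ, 0 < ε → ε ≤ 1 →
      ∀ y : ℝ × (Fin m → ℝ) × ℝ, ‖y‖ ≤ R →
        |y.1| ≤ M * ε → 0 ≤ y.2.2 → y.2.2 ≤ M * ε →
        |compList (L.map (tangentGen m))
            (fun z => f (z, z.1 / ε, z.2.2 / ε) * z.2.2 ^ 2 / ε) y| ≤ C * ε := by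
  intro L M hM R hR
  have hTame : Stmt18Aux.Tame m f := ⟨hf.of_le (by simp), hbdd⟩
  have hbase : Stmt18Aux.AdmOn m (fun ε z => f (z, z.1 / ε, z.2.2 / ε) * z.2.2 ^ 2 / ε) := by
    refine (Stmt18Aux.Adm.base (m := m) 1 f 0 2 1 hTame (by omega)).admOn.congr
      fun ε hε y => ?_
    show (1:ℝ) * f (y, y.1 / ε, y.2.2 / ε) * y.1 ^ 0 * y.2.2 ^ 2 / ε ^ 1
        = f (y, y.1 / ε, y.2.2 / ε) * y.2.2 ^ 2 / ε
    rw [pow_one]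
    ring
  have key : Stmt18Aux.AdmOn m (fun ε => compList (L.map (tangentGen m))
      (fun z => f (z, z.1 / ε, z.2.2 / ε) * z.2.2 ^ 2 / ε)) := by
    induction L with
    | nil => exact hbase
    | cons i L' ih => exact ih.gen i
  obtain ⟨C, hC⟩ := key.bound M hM R hR
  exact ⟨C, fun ε hε hε1 y hy e1 e2 e3 => hC ε hε hε1 y hy e1 e2 e3⟩
end
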